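/- arXiv:1604.02714 — 2 statements merged into one kernel-verified Lean document; each statement's English description precedes it below -/
import Mathlib

section
/- Let A be an n×m binary matrix and let X ∈ S_n act on A by swapping two rows u < v. If r(XA) < r(A) in lexicographic order, then c(XA) < c(A) in lexicographic order. -/
/-- The value of a row of length `m` read as a binary number (most significant digit first). -/
def rowVal (m : ℕ) (row : Fin m → Bool) : ℕ :=
  ∑ j : Fin m, (row j).toNat * 2 ^ (m - 1 - (j : ℕ))

/-- `r(A)`: the tuple of row values of a binary matrix. -/
def rtup {n m : ℕ} (A : Fin n → Fin m → Bool) : Fin n → ℕ :=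
  fun i => rowVal m (A i)

/-- `c(A)`: the tuple of column values of a binary matrix. -/
def ctup {n m : ℕ} (A : Fin n → Fin m → Bool) : Fin m → ℕ :=
  fun j => rowVal n (fun i => A i j)

/-- `A ∼ B`: `B` is obtained from `A` by permuting rows and columns. -/
def MatEquiv {n m : ℕ} (A B : Fin n → Fin m → Bool) : Prop :=
  ∃ (ρ : Equiv.Perm (Fin n)) (σ : Equiv.Perm (Fin m)), ∀ i j, B i j = A (ρ i) (σ j)

/-- `A` is semi-canonical: both `r(A)` and `c(A)` are weakly increasing. -/
def SemiCanonical {n m : ℕ} (A : Fin n → Fin m → Bool) : Prop :=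
  Monotone (rtup A) ∧ Monotone (ctup A)

/-- `A` is canonical: `r(A)` is the lexicographic minimum over the equivalence class of `A`. -/
def Canonical {n m : ℕ} (A : Fin n → Fin m → Bool) : Prop :=
  ∀ B, MatEquiv A B → toLex (rtup A) ≤ toLex (rtup B)

lemma rowVal_succ (m : ℕ) (r : Fin (m + 1) → Bool) :
    rowVal (m + 1) r = (r 0).toNat * 2 ^ m + rowVal m (fun j => r j.succ) := by
  rw [rowVal, rowVal, Fin.sum_univ_succ]
  simp only [Fin.val_zero, Fin.val_succ, Nat.add_sub_cancel, Nat.sub_zero]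
  congr 1
  apply Finset.sum_congr rfl
  intro j _
  congr 2
  omega

lemma rowVal_lt_two_pow (m : ℕ) (r : Fin m → Bool) : rowVal m r < 2 ^ m := by
  induction m with
  | zero => simp [rowVal]
  | succ k ih =>
    rw [rowVal_succ]
    have := ih (fun j => r j.succ)
    have hb : (r 0).toNat ≤ 1 := Bool.toNat_le _
    calc (r 0).toNat * 2 ^ k + rowVal k (fun j => r j.succ)
        < (r 0).toNat * 2 ^ k + 2 ^ k := by omega
      _ ≤ 2 ^ k + 2 ^ k := by nlinarith
      _ = 2 ^ (k + 1) := by ring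

lemma rowVal_lt {m : ℕ} (r s : Fin m → Bool) (j0 : Fin m)
    (hpre : ∀ j, j < j0 → r j = s j) (hr : r j0 = false) (hs : s j0 = true) :
    rowVal m r < rowVal m s := by
  induction m with
  | zero => exact absurd j0.2 (by omega)
  | succ k ih =>
    rw [rowVal_succ k r, rowVal_succ k s]
    rcases Fin.eq_zero_or_eq_succ j0 with h0 | ⟨j1, hj1⟩
    · subst h0
      rw [hr, hs]
      have := rowVal_lt_two_pow k (fun j => r j.succ)
      have := rowVal_lt_two_pow k (fun j => s j.succ)
      simp only [Bool.toNat_false, Bool.toNat_true]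
      omega
    · subst hj1
      have h0 : r 0 = s 0 := hpre 0 (Fin.succ_pos j1)
      rw [h0]
      have htail : rowVal k (fun j => r j.succ) < rowVal k (fun j => s j.succ) := by
        apply ih _ _ j1
        · intro j hj
          exact hpre j.succ (Fin.succ_lt_succ_iff.2 hj)
        · exact hr
        · exact hs
      omega

theorem swap_rows_lex {n m : ℕ} (A : Fin n → Fin m → Bool) (u v : Fin n) (huv : u < v)
    (h : toLex (rtup (fun i j => A (Equiv.swap u v i) j)) < toLex (rtup A)) :
    toLex (ctup (fun i j => A (Equiv.swap u v i) j)) < toLex (ctup A) := by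
  set B : Fin n → Fin m → Bool := fun i j => A (Equiv.swap u v i) j with hB
  have hBu : B u = A v := by simp [hB, Equiv.swap_apply_left]
  have hBv : B v = A u := by simp [hB, Equiv.swap_apply_right]
  have hBo : ∀ i, i ≠ u → i ≠ v → B i = A i := by
    intro i hi1 hi2
    simp [hB, Equiv.swap_apply_of_ne_of_ne hi1 hi2]
  -- unpack the lex hypothesis
  obtain ⟨i, hpre, hi⟩ := h
  simp only [Pi.toLex_apply, rtup] at hpre hi
  -- identify the witness index as u, with rowVal (A v) < rowVal (A u)
  have key : rowVal m (A v) < rowVal m (A u) := by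
    rcases eq_or_ne i u with rfl | hiu
    · rwa [hBu] at hi
    rcases eq_or_ne i v with rfl | hiv
    · have h1 := hpre u huv
      rw [hBu] at h1
      rw [hBv] at hi
      omega
    · rw [hBo i hiu hiv] at hi
      exact absurd hi (lt_irrefl _)
  -- rows A u and A v differ somewhere
  have hne : A u ≠ A v := by
    intro he
    rw [he] at key
    exact lt_irrefl _ key
  have hSne : (Finset.univ.filter (fun j => A u j ≠ A v j)).Nonempty := by
    rcases Function.ne_iff.1 hne with ⟨j, hj⟩
    exact ⟨j, by simp [hj]⟩
  set j0 := Finset.min' _ hSne with hj0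
  have hj0mem : A u j0 ≠ A v j0 := by
    have := Finset.min'_mem _ hSne
    simpa using this
  have hj0min : ∀ j, j < j0 → A u j = A v j := by
    intro j hj
    by_contra hc
    have : j0 ≤ j := Finset.min'_le _ _ (by simp [hc])
    omega
  -- at j0 : A u j0 = true, A v j0 = false
  have hvals : A u j0 = true ∧ A v j0 = false := by
    rcases Bool.eq_false_or_eq_true (A u j0) with h1 | h1
    · refine ⟨h1, ?_⟩
      rcases Bool.eq_false_or_eq_true (A v j0) with h2 | h2
      · exact absurd (h1.trans h2.symm) hj0mem
      · exact h2
    · have h2 : A v j0 = true := by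
        rcases Bool.eq_false_or_eq_true (A v j0) with h2 | h2
        · exact h2
        · exact absurd (h1.trans h2.symm) hj0mem
      have := rowVal_lt (A u) (A v) j0 hj0min h1 h2
      omega
  -- build the lex witness for columns
  refine ⟨j0, ?_, ?_⟩
  · intro j hj
    simp only [Pi.toLex_apply, ctup]
    congr 1
    funext i
    rcases eq_or_ne i u with rfl | hiu
    · rw [hBu]; exact (hj0min j hj).symm
    rcases eq_or_ne i v with rfl | hiv
    · rw [hBv]; exact hj0min j hj
    · rw [hBo i hiu hiv]
  · simp only [Pi.toLex_apply, ctup]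
    apply rowVal_lt _ _ u
    · intro i hi'
      have h1 : i ≠ u := ne_of_lt hi'
      have h2 : i ≠ v := ne_of_lt (lt_trans hi' huv)
      rw [hBo i h1 h2]
    · rw [hBu]; exact hvals.2
    · exact hvals.1
end

section
/- If A is a canonical n×m binary matrix, then for every i with 2 ≤ i ≤ n, the number of 1's in the i-th row is at least the number of 1's in the first row: ε_1(A) ≤ ε_i(A). -/
lemma sum_range_two_pow (k : ℕ) : ∑ i ∈ Finset.range k, 2 ^ i = 2 ^ k - 1 := by
  induction k with
  | zero => simp
  | succ k ih =>
    rw [Finset.sum_range_succ, ih]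
    have : 1 ≤ 2 ^ k := Nat.one_le_two_pow
    rw [pow_succ]; omega

lemma sum_pow_ge (S : Finset ℕ) : 2 ^ S.card - 1 ≤ ∑ e ∈ S, 2 ^ e := by
  induction S using Finset.strongInduction with
  | _ S ih =>
    rcases S.eq_empty_or_nonempty with rfl | hne
    · simp
    · have hM : S.max' hne ∈ S := S.max'_mem hne
      have hsub : S ⊆ Finset.range (S.max' hne + 1) :=
        fun x hx => Finset.mem_range.2 (Nat.lt_succ_of_le (S.le_max' x hx))
      have hcard : S.card ≤ S.max' hne + 1 := by
        simpa using Finset.card_le_card hsub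
      have hpos : 1 ≤ S.card := Finset.card_pos.2 hne
      have hrec := ih (S.erase (S.max' hne)) (Finset.erase_ssubset hM)
      rw [Finset.card_erase_of_mem hM] at hrec
      rw [← Finset.add_sum_erase _ _ hM]
      have h1 : 2 ^ (S.card - 1) ≤ 2 ^ (S.max' hne) :=
        Nat.pow_le_pow_right (by norm_num) (by omega)
      have h2 : 2 ^ S.card = 2 * 2 ^ (S.card - 1) := by
        rw [← pow_succ']; congr 1; omega
      have : 1 ≤ 2 ^ (S.card - 1) := Nat.one_le_two_pow
      omega

lemma sum_pow_le {S : Finset ℕ} {k : ℕ} (h : ∀ e ∈ S, e < k) :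
    ∑ e ∈ S, 2 ^ e ≤ 2 ^ k - 1 := by
  rw [← sum_range_two_pow]
  exact Finset.sum_le_sum_of_subset (fun x hx => Finset.mem_range.2 (h x hx))

lemma rowVal_eq_image (m : ℕ) (row : Fin m → Bool) :
    rowVal m row =
      ∑ e ∈ (Finset.univ.filter (fun j : Fin m => row j = true)).image
        (fun j : Fin m => m - 1 - (j : ℕ)), 2 ^ e := by
  rw [Finset.sum_image]
  · rw [rowVal, Finset.sum_filter]
    apply Finset.sum_congr rfl
    intro j _
    cases hj : row j <;> simp [hj]
  · intro a ha b hb hab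
    have ha' : (a : ℕ) < m := a.isLt
    have hb' : (b : ℕ) < m := b.isLt
    have hab' : m - 1 - (a : ℕ) = m - 1 - (b : ℕ) := hab
    exact Fin.ext (by omega)

lemma card_image_exps (m : ℕ) (row : Fin m → Bool) :
    ((Finset.univ.filter (fun j : Fin m => row j = true)).image
        (fun j : Fin m => m - 1 - (j : ℕ))).card
      = ∑ j : Fin m, (row j).toNat := by
  rw [Finset.card_image_of_injOn]
  · rw [Finset.card_filter]
    apply Finset.sum_congr rfl
    intro j _
    cases hj : row j <;> simp [hj]
  · intro a _ b _ hab
    have ha' : (a : ℕ) < m := a.isLt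
    have hb' : (b : ℕ) < m := b.isLt
    have hab' : m - 1 - (a : ℕ) = m - 1 - (b : ℕ) := hab
    exact Fin.ext (by omega)

lemma rowVal_ge (m : ℕ) (row : Fin m → Bool) :
    2 ^ (∑ j : Fin m, (row j).toNat) - 1 ≤ rowVal m row := by
  rw [rowVal_eq_image, ← card_image_exps]
  exact sum_pow_ge _

lemma rowVal_le_of_monotone (m : ℕ) (row : Fin m → Bool) (hmono : Monotone row) :
    rowVal m row ≤ 2 ^ (∑ j : Fin m, (row j).toNat) - 1 := by
  rw [rowVal_eq_image]
  apply sum_pow_le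
  intro e he
  rw [Finset.mem_image] at he
  obtain ⟨j, hj, rfl⟩ := he
  rw [Finset.mem_filter] at hj
  -- all j' ≥ j are true, so count ≥ m - j
  have hsub : (Finset.Ici j) ⊆ Finset.univ.filter (fun j' : Fin m => row j' = true) := by
    intro x hx
    rw [Finset.mem_Ici] at hx
    refine Finset.mem_filter.2 ⟨Finset.mem_univ _, ?_⟩
    have := hmono hx
    rw [hj.2] at this
    exact Bool.eq_true_of_true_le this
  have hcard : m - (j : ℕ) ≤ (Finset.univ.filter (fun j' : Fin m => row j' = true)).card := by
    have := Finset.card_le_card hsub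
    rwa [Fin.card_Ici] at this
  have hcount : (Finset.univ.filter (fun j' : Fin m => row j' = true)).card
      = ∑ j : Fin m, (row j).toNat := by
    rw [Finset.card_filter]
    apply Finset.sum_congr rfl
    intro x _
    cases hx : row x <;> simp [hx]
  rw [hcount] at hcard
  have hjlt : (j : ℕ) < m := j.isLt
  omega

theorem canonical_first_row_min_ones {n m : ℕ} (A : Fin (n + 1) → Fin m → Bool)
    (hA : Canonical A) :
    ∀ i : Fin (n + 1), i ≠ 0 →
      (∑ j : Fin m, (A 0 j).toNat) ≤ (∑ j : Fin m, (A i j).toNat) := by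
  intro i hi
  set σ : Equiv.Perm (Fin m) := Tuple.sort (A i) with hσ
  set B : Fin (n + 1) → Fin m → Bool := fun i' j => A (Equiv.swap 0 i i') (σ j) with hB
  have hequiv : MatEquiv A B := ⟨Equiv.swap 0 i, σ, fun _ _ => rfl⟩
  have hle := hA B hequiv
  -- first coordinate
  have h0 : rtup A 0 ≤ rtup B 0 := by
    rcases hle.lt_or_eq with hlt | heq
    · obtain ⟨k, hbefore, hk⟩ := hlt
      rcases eq_or_ne k 0 with rfl | hk0
      · exact le_of_lt hk
      · exact le_of_eq (hbefore 0 (Fin.pos_of_ne_zero hk0))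
    · exact le_of_eq (congrFun heq 0)
  have hB0 : rtup B 0 = rowVal m (fun j => A i (σ j)) := by
    simp [rtup, hB, Equiv.swap_apply_left]
  have hmono : Monotone (fun j => A i (σ j)) := Tuple.monotone_sort (A i)
  have hsum : (∑ j : Fin m, (A i (σ j)).toNat) = ∑ j : Fin m, (A i j).toNat :=
    Fintype.sum_equiv σ _ _ (fun _ => rfl)
  have h1 : 2 ^ (∑ j : Fin m, (A 0 j).toNat) - 1 ≤ rtup A 0 := rowVal_ge m (A 0)
  have h2 : rtup B 0 ≤ 2 ^ (∑ j : Fin m, (A i j).toNat) - 1 := by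
    rw [hB0, ← hsum]
    exact rowVal_le_of_monotone m _ hmono
  have key : 2 ^ (∑ j : Fin m, (A 0 j).toNat) - 1 ≤ 2 ^ (∑ j : Fin m, (A i j).toNat) - 1 :=
    h1.trans (h0.trans h2)
  have hp1 : (1:ℕ) ≤ 2 ^ (∑ j : Fin m, (A 0 j).toNat) := Nat.one_le_two_pow
  have hp2 : (1:ℕ) ≤ 2 ^ (∑ j : Fin m, (A i j).toNat) := Nat.one_le_two_pow
  have hpow : 2 ^ (∑ j : Fin m, (A 0 j).toNat) ≤ 2 ^ (∑ j : Fin m, (A i j).toNat) := by omega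
  exact Nat.pow_le_pow_iff_right (by norm_num) |>.1 hpow
end
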